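/- Let β ∈ (0,2), k ≥ 0, and let μ be a Borel probability measure on (0,∞) with a density f satisfying f(v) ≤ C₁ v^{−β/2−1} for all v > 0, for some constant C₁ > 0. Let φ(x) = ∫₀^∞ ρ_v(x) μ(dv) and suppose there is c₁ > 0 with φ(x) ≥ c₁ |x|^{−(β+1)} for all |x| ≥ 1. Then for all |x| ≥ 1, ∫₀^∞ v^{−k} F(dv|x) ≤ K |x|^{−2k}, where K = C₁ c₁^{−1} (2π)^{−1/2} 2^{(2k+β+1)/2} Γ((2k+β+1)/2). -/

import Mathlib

open MeasureTheory
open scoped ENNReal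

/-- The density `ρ_v(x) = (2πv)^{-1/2} exp(−x²/(2v))` of the centered Gaussian law `N(0,v)`. -/
noncomputable def gaussDens (v x : ℝ) : ℝ :=
  Real.exp (-(x ^ 2) / (2 * v)) / Real.sqrt (2 * Real.pi * v)

/-- The normal variance-mixture function `φ(x) = ∫₀^∞ ρ_v(x) μ(dv)`. -/
noncomputable def mixDens (μ : Measure ℝ) (x : ℝ) : ℝ :=
  ∫ v, gaussDens v x ∂μ

/-- The conditional mixing measure `F(dv|x) = ρ_v(x) μ(dv) / φ(x)`. -/
noncomputable def condMeasure (μ : Measure ℝ) (x : ℝ) : Measure ℝ :=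
  (ENNReal.ofReal (mixDens μ x))⁻¹ • μ.withDensity (fun v => ENNReal.ofReal (gaussDens v x))

/-!
Bounding the density of `μ` by `C₁ v^{-β/2-1}` turns `∫ v^{-k} ρ_v(x) μ(dv)` into a constant
multiple of the inverse-gamma integral `∫₀^∞ e^{-a/v} v^{-s-1} dv = a^{-s} Γ(s)`, with
`a = x²/2` and `s = (2k+β+1)/2`; this gives `≲ |x|^{-(2k+β+1)}`, and dividing by
`φ(x) ≳ |x|^{-(β+1)}` leaves `|x|^{-2k}`.
-/

open Real Set

/-- The substitution `v = t⁻¹` reduces this to the Gamma integral. -/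
lemma lintegral_exp_neg_div_mul_rpow_Ioi {a s : ℝ} (ha : 0 < a) (hs : 0 < s) :
    ∫⁻ v in Ioi 0, ENNReal.ofReal (exp (-(a / v)) * v ^ (-s - 1))
      = ENNReal.ofReal (a ^ (-s) * Gamma s) := by
  have hinv : (fun t : ℝ => t⁻¹) '' Ioi 0 = Ioi 0 := by
    ext t; simp [inv_pos]
  rw [← hinv, lintegral_image_eq_lintegral_abs_deriv_mul measurableSet_Ioi
    (fun t ht => (hasDerivAt_inv (ne_of_gt ht)).hasDerivWithinAt) inv_injective.injOn]
  have hpt : ∀ t ∈ Ioi (0 : ℝ), ENNReal.ofReal |-(t ^ 2)⁻¹| *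
      ENNReal.ofReal (exp (-(a / t⁻¹)) * t⁻¹ ^ (-s - 1))
        = ENNReal.ofReal (t ^ (s - 1) * exp (-(a * t))) := by
    intro t (ht : 0 < t)
    rw [← ENNReal.ofReal_mul (abs_nonneg _), abs_neg, abs_of_pos (by positivity),
      inv_rpow ht.le, ← rpow_neg ht.le, ← rpow_natCast, ← rpow_neg ht.le, div_inv_eq_mul,
      mul_left_comm, ← rpow_add ht]
    ring_nf
  have hint : IntegrableOn (fun t : ℝ => t ^ (s - 1) * exp (-(a * t))) (Ioi 0) := by
    simpa using integrableOn_rpow_mul_exp_neg_mul_rpow (p := 1) (by linarith) one_pos ha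
  rw [setLIntegral_congr_fun measurableSet_Ioi hpt, ← ofReal_integral_eq_lintegral_ofReal hint
    ((ae_restrict_iff' measurableSet_Ioi).2 (.of_forall fun t (ht : 0 < t) => by positivity)),
    integral_rpow_mul_exp_neg_mul_Ioi hs ha, one_div, inv_rpow ha.le, rpow_neg ha.le]

lemma gaussDens_nonneg (v x : ℝ) : 0 ≤ gaussDens v x := by
  unfold gaussDens; positivity

lemma measurable_gaussDens (x : ℝ) : Measurable fun v => gaussDens v x := by
  unfold gaussDens; fun_prop

lemma gaussDens_eq {v : ℝ} (hv : 0 < v) (x : ℝ) :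
    gaussDens v x = (√(2 * π))⁻¹ * v ^ (-(1 / 2 : ℝ)) * exp (-(x ^ 2 / 2 / v)) := by
  rw [gaussDens, sqrt_mul (by positivity), sqrt_eq_rpow v, rpow_neg hv.le]
  field_simp

lemma lintegral_gaussDens_mul_rpow_Ioi {x s : ℝ} (hx : x ≠ 0) (hs : 0 < s) :
    ∫⁻ v in Ioi 0, ENNReal.ofReal (gaussDens v x * v ^ (-s - 1 / 2))
      = ENNReal.ofReal ((√(2 * π))⁻¹ * 2 ^ s * Gamma s * |x| ^ (-(2 * s))) := by
  have hpt : ∀ v ∈ Ioi (0 : ℝ), ENNReal.ofReal (gaussDens v x * v ^ (-s - 1 / 2))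
      = ENNReal.ofReal (√(2 * π))⁻¹ * ENNReal.ofReal (exp (-(x ^ 2 / 2 / v)) * v ^ (-s - 1)) := by
    intro v (hv : 0 < v)
    rw [← ENNReal.ofReal_mul (by positivity), gaussDens_eq hv,
      show v ^ (-s - 1) = v ^ (-(1 / 2 : ℝ)) * v ^ (-s - 1 / 2) by rw [← rpow_add hv]; ring_nf]
    ring_nf
  have hpow : (x ^ 2 / 2) ^ (-s) = 2 ^ s * |x| ^ (-(2 * s)) := by
    rw [div_rpow (by positivity) zero_le_two, ← sq_abs, ← rpow_natCast, ← rpow_mul (abs_nonneg x),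
      rpow_neg zero_le_two, div_inv_eq_mul]
    push_cast; ring_nf
  rw [setLIntegral_congr_fun measurableSet_Ioi hpt, lintegral_const_mul' _ _ ENNReal.ofReal_ne_top,
    lintegral_exp_neg_div_mul_rpow_Ioi (by positivity) hs, ← ENNReal.ofReal_mul (by positivity),
    hpow]
  ring_nf

lemma lintegral_condMeasure (μ : Measure ℝ) (x : ℝ) (g : ℝ → ℝ≥0∞) :
    ∫⁻ v, g v ∂condMeasure μ x
      = (ENNReal.ofReal (mixDens μ x))⁻¹ * ∫⁻ v, ENNReal.ofReal (gaussDens v x) * g v ∂μ := by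
  rw [condMeasure, lintegral_smul_measure, smul_eq_mul,
    lintegral_withDensity_eq_lintegral_mul_non_measurable _ (measurable_gaussDens x).ennreal_ofReal
      (.of_forall fun _ => ENNReal.ofReal_lt_top)]
  rfl

lemma lintegral_condMeasure_le {μ : Measure ℝ} {x m A : ℝ} {g : ℝ → ℝ≥0∞} (hm : 0 < m)
    (hmx : m ≤ mixDens μ x)
    (hg : ∫⁻ v, ENNReal.ofReal (gaussDens v x) * g v ∂μ ≤ ENNReal.ofReal A) :
    ∫⁻ v, g v ∂condMeasure μ x ≤ ENNReal.ofReal (A / m) := calc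
  _ ≤ ENNReal.ofReal A / ENNReal.ofReal (mixDens μ x) := by
    rw [lintegral_condMeasure, ENNReal.div_eq_inv_mul]; gcongr
  _ ≤ ENNReal.ofReal A / ENNReal.ofReal m := by gcongr
  _ = ENNReal.ofReal (A / m) := (ENNReal.ofReal_div_of_pos hm).symm

lemma lintegral_gaussDens_mul_rpow_le_of_density_le {p k C₁ x : ℝ} {f : ℝ → ℝ} {μ : Measure ℝ}
    (hC₁ : 0 ≤ C₁)
    (hμd : μ = (volume.restrict (Ioi 0)).withDensity fun v => ENNReal.ofReal (f v))
    (hfb : ∀ v : ℝ, 0 < v → f v ≤ C₁ * v ^ (-p - 1)) (hx : x ≠ 0) (hs : 0 < p + k + 1 / 2) :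
    ∫⁻ v, ENNReal.ofReal (gaussDens v x) * ENNReal.ofReal (v ^ (-k)) ∂μ
      ≤ ENNReal.ofReal (C₁ * ((√(2 * π))⁻¹ * 2 ^ (p + k + 1 / 2) * Gamma (p + k + 1 / 2) *
          |x| ^ (-(2 * (p + k + 1 / 2))))) := by
  have hμ_le : μ ≤ (volume.restrict (Ioi 0)).withDensity
      fun v => ENNReal.ofReal (C₁ * v ^ (-p - 1)) :=
    hμd ▸ withDensity_mono ((ae_restrict_iff' measurableSet_Ioi).2
      (.of_forall fun v hv => ENNReal.ofReal_le_ofReal (hfb v hv)))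
  have hpt : ∀ v ∈ Ioi (0 : ℝ), ENNReal.ofReal (C₁ * v ^ (-p - 1)) *
      (ENNReal.ofReal (gaussDens v x) * ENNReal.ofReal (v ^ (-k)))
        = ENNReal.ofReal C₁ *
          ENNReal.ofReal (gaussDens v x * v ^ (-(p + k + 1 / 2) - 1 / 2)) := by
    intro v (hv : 0 < v)
    rw [← ENNReal.ofReal_mul (gaussDens_nonneg v x), ← ENNReal.ofReal_mul hC₁,
      ← ENNReal.ofReal_mul (by positivity),
      show v ^ (-(p + k + 1 / 2) - 1 / 2) = v ^ (-p - 1) * v ^ (-k) by rw [← rpow_add hv]; ring_nf]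
    ring_nf
  calc _ ≤ ∫⁻ v in Ioi 0, ENNReal.ofReal (C₁ * v ^ (-p - 1)) *
          (ENNReal.ofReal (gaussDens v x) * ENNReal.ofReal (v ^ (-k))) := by
        grw [hμ_le]
        rw [lintegral_withDensity_eq_lintegral_mul_non_measurable _ (by fun_prop)
          (.of_forall fun _ => ENNReal.ofReal_lt_top)]
        rfl
    _ = _ := by
      rw [setLIntegral_congr_fun measurableSet_Ioi hpt, lintegral_const_mul' _ _
        ENNReal.ofReal_ne_top, lintegral_gaussDens_mul_rpow_Ioi hx hs, ← ENNReal.ofReal_mul hC₁]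

theorem conditional_negative_moment_bound_general (β k : ℝ) (hβ : β ∈ Set.Ioo (0 : ℝ) 2)
    (hk : 0 ≤ k) (f : ℝ → ℝ) (C₁ : ℝ) (hC₁ : 0 < C₁)
    (μ : Measure ℝ)
    (hμd : μ = (volume.restrict (Set.Ioi (0 : ℝ))).withDensity
        (fun v => ENNReal.ofReal (f v)))
    (hfb : ∀ v : ℝ, 0 < v → f v ≤ C₁ * v ^ (-β / 2 - 1))
    (c₁ : ℝ) (hc₁ : 0 < c₁)
    (hφ : ∀ x : ℝ, 1 ≤ |x| → c₁ * |x| ^ (-(β + 1)) ≤ mixDens μ x) :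
    ∀ x : ℝ, 1 ≤ |x| →
      ∫⁻ v, ENNReal.ofReal (v ^ (-k)) ∂(condMeasure μ x)
        ≤ ENNReal.ofReal (C₁ * c₁⁻¹ * (Real.sqrt (2 * Real.pi))⁻¹ *
            2 ^ ((2 * k + β + 1) / 2) * Real.Gamma ((2 * k + β + 1) / 2) *
            |x| ^ (-(2 * k))) := by
  intro x hx
  have hx0 : 0 < |x| := one_pos.trans_le hx
  have hmoment := lintegral_gaussDens_mul_rpow_le_of_density_le (k := k) hC₁.le hμd
    (fun v hv => (hfb v hv).trans_eq (by rw [neg_div])) (abs_pos.1 hx0)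
    (by linarith [hβ.1] : 0 < β / 2 + k + 1 / 2)
  refine (lintegral_condMeasure_le (by positivity) (hφ x hx) hmoment).trans_eq ?_
  have hpow : |x| ^ (-(2 * k)) = |x| ^ (-(2 * (β / 2 + k + 1 / 2))) / |x| ^ (-(β + 1)) := by
    rw [← rpow_sub hx0]; ring_nf
  rw [hpow, show (2 * k + β + 1) / 2 = β / 2 + k + 1 / 2 by ring]
  ring_nf

/-- Let `β ∈ (0,2)`, `k ≥ 0`, and let `μ` be a Borel probability measure on
`(0,∞)` with density `f` satisfying `f(v) ≤ C₁ v^{−β/2−1}`. If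
`φ(x) ≥ c₁ |x|^{−(β+1)}` for `|x| ≥ 1`, then for all `|x| ≥ 1`,
`∫ v^{−k} F(dv|x) ≤ K |x|^{−2k}` with
`K = C₁ c₁⁻¹ (2π)^{−1/2} 2^{(2k+β+1)/2} Γ((2k+β+1)/2)`. -/
theorem conditional_negative_moment_bound (β k : ℝ) (hβ : β ∈ Set.Ioo (0 : ℝ) 2)
    (hk : 0 ≤ k) (f : ℝ → ℝ) (hf0 : ∀ v, 0 ≤ f v) (C₁ : ℝ) (hC₁ : 0 < C₁)
    (μ : Measure ℝ) [IsProbabilityMeasure μ]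
    (hμd : μ = (volume.restrict (Set.Ioi (0 : ℝ))).withDensity
        (fun v => ENNReal.ofReal (f v)))
    (hfb : ∀ v : ℝ, 0 < v → f v ≤ C₁ * v ^ (-β / 2 - 1))
    (c₁ : ℝ) (hc₁ : 0 < c₁)
    (hφ : ∀ x : ℝ, 1 ≤ |x| → c₁ * |x| ^ (-(β + 1)) ≤ mixDens μ x) :
    ∀ x : ℝ, 1 ≤ |x| →
      ∫⁻ v, ENNReal.ofReal (v ^ (-k)) ∂(condMeasure μ x)
        ≤ ENNReal.ofReal (C₁ * c₁⁻¹ * (Real.sqrt (2 * Real.pi))⁻¹ *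
            2 ^ ((2 * k + β + 1) / 2) * Real.Gamma ((2 * k + β + 1) / 2) *
            |x| ^ (-(2 * k))) :=
  conditional_negative_moment_bound_general β k hβ hk f C₁ hC₁ μ hμd hfb c₁ hc₁ hφ
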